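/- The group defined by the presentation ⟨r, s | r^5 = s^2 = 1, r^3 s = s r, s r s = r^2⟩ is isomorphic to the cyclic group of order 2. -/

import Mathlib

/-- The relations `r^5 = s^2 = 1`, `r^3 s = s r`, `s r s = r^2`, with `r` and `s`
the generators indexed by `0` and `1`. -/
def petersenRels : Set (FreeGroup (Fin 2)) :=
  { (FreeGroup.of 0) ^ 5,
    (FreeGroup.of 1) ^ 2,
    ((FreeGroup.of 0) ^ 3 * FreeGroup.of 1) * (FreeGroup.of 1 * FreeGroup.of 0)⁻¹,
    (FreeGroup.of 1 * FreeGroup.of 0 * FreeGroup.of 1) * ((FreeGroup.of 0) ^ 2)⁻¹ }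

/-!
Multiplying `r³s = sr` on the right by `s` and using `s² = 1` gives `r³ = srs = r²`, so `r = 1`.
The group is therefore generated by the involution `s`, and `s ≠ 1` because `r ↦ 0`, `s ↦ 1`
respects all four relations in `ZMod 2`.
-/

theorem eq_one_of_pow_three_mul_eq_mul_of_mul_mul_eq_sq {G : Type*} [Group G] {r s : G}
    (hs : s ^ 2 = 1) (h₁ : r ^ 3 * s = s * r) (h₂ : s * r * s = r ^ 2) : r = 1 := by
  have h : r ^ 2 * r = r ^ 2 :=
    calc r ^ 2 * r = r ^ 3 * s ^ 2 := by rw [hs, mul_one, ← pow_succ]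
      _ = s * r * s := by rw [sq, ← mul_assoc, h₁]
      _ = r ^ 2 := h₂
  exact mul_eq_left.mp h

noncomputable def zmodMulEquivOfGeneratorOfPowPrime {G : Type*} [Group G] {p : ℕ} [Fact p.Prime]
    {g : G} (hg : ∀ x, x ∈ Subgroup.zpowers g) (hp : g ^ p = 1) (hne : g ≠ 1) :
    Multiplicative (ZMod p) ≃* G :=
  zmodMulEquivOfGenerator hg <|
    (orderOf_eq_card_of_forall_mem_zpowers hg).symm.trans (orderOf_eq_prime hp hne)

namespace PetersenPresentation

noncomputable abbrev r : PresentedGroup petersenRels := PresentedGroup.of 0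

noncomputable abbrev s : PresentedGroup petersenRels := PresentedGroup.of 1

theorem s_sq : s ^ 2 = 1 := by
  have h := PresentedGroup.one_of_mem (rels := petersenRels) (x := FreeGroup.of 1 ^ 2)
    (by simp [petersenRels])
  rwa [map_pow] at h

theorem r_cube_mul_s : r ^ 3 * s = s * r := by
  have h := PresentedGroup.mk_eq_mk_of_mul_inv_mem (rels := petersenRels)
    (x := FreeGroup.of 0 ^ 3 * FreeGroup.of 1) (y := FreeGroup.of 1 * FreeGroup.of 0)
    (by simp [petersenRels])
  rwa [map_mul, map_pow, map_mul] at h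

theorem s_mul_r_mul_s : s * r * s = r ^ 2 := by
  have h := PresentedGroup.mk_eq_mk_of_mul_inv_mem (rels := petersenRels)
    (x := FreeGroup.of 1 * FreeGroup.of 0 * FreeGroup.of 1) (y := FreeGroup.of 0 ^ 2)
    (by simp [petersenRels])
  rwa [map_mul, map_mul, map_pow] at h

theorem r_eq_one : r = 1 :=
  eq_one_of_pow_three_mul_eq_mul_of_mul_mul_eq_sq s_sq r_cube_mul_s s_mul_r_mul_s

theorem mem_zpowers_s (x : PresentedGroup petersenRels) : x ∈ Subgroup.zpowers s :=
  PresentedGroup.generated_by _ _ (Fin.forall_fin_two.mpr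
    ⟨show r ∈ _ from r_eq_one ▸ Subgroup.one_mem _, Subgroup.mem_zpowers s⟩) x

theorem parity_rels : ∀ w ∈ petersenRels,
    FreeGroup.lift ![(1 : Multiplicative (ZMod 2)), Multiplicative.ofAdd 1] w = 1 := by
  rintro w (rfl | rfl | rfl | rfl) <;>
    simp only [map_mul, map_inv, map_pow, FreeGroup.lift_apply_of, Matrix.cons_val_zero,
      Matrix.cons_val_one, Matrix.cons_val_fin_one] <;>
    decide

noncomputable def parity : PresentedGroup petersenRels →* Multiplicative (ZMod 2) :=
  PresentedGroup.toGroup parity_rels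

theorem parity_s : parity s = Multiplicative.ofAdd 1 :=
  PresentedGroup.toGroup.of parity_rels

theorem s_ne_one : s ≠ 1 := fun h ↦ by
  have h₁ : (1 : Multiplicative (ZMod 2)) = Multiplicative.ofAdd 1 := by
    rw [← parity_s, h, map_one]
  exact absurd h₁ (by decide)

end PetersenPresentation

/-- The group presented by `⟨r, s ∣ r^5 = s^2 = 1, r^3 s = s r, s r s = r^2⟩`
is isomorphic to the cyclic group of order 2. -/
theorem petersen_presented_group_iso_C2 :
    Nonempty (PresentedGroup petersenRels ≃* Multiplicative (ZMod 2)) :=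
  ⟨(zmodMulEquivOfGeneratorOfPowPrime PetersenPresentation.mem_zpowers_s
    PetersenPresentation.s_sq PetersenPresentation.s_ne_one).symm⟩
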